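/- Let B be a real symmetric 3×3 matrix whose smallest eigenvalue λ₁ has a one-dimensional eigenspace, spanned by a unit vector v. Let x₁,…,x_K ∈ ℝ³ with weights w_i > 0, set W = Σᵢ wᵢ, and suppose B equals the landmark matrix B = (1/K)(Σᵢ wᵢ xᵢ xᵢᵀ − (1/W)(Σᵢ wᵢ xᵢ)(Σᵢ wᵢ xᵢ)ᵀ) + (γ/N) Σⱼ pⱼ (‖yⱼ‖² I − yⱼ yⱼᵀ)/‖yⱼ‖² for nonzero vectors y₁,…,y_N ∈ ℝ³, weights pⱼ > 0 and γ > 0. Then the quadratic plane-fitting objective F(n,d) = (1/K) Σᵢ wᵢ (⟪xᵢ,n⟫ + d)² + (γ/N) Σⱼ pⱼ ‖yⱼ × n‖²/‖yⱼ‖², minimized over pairs (n,d) with ‖n‖ = 1 and d ∈ ℝ, has exactly two minimizers: (v, d*(v)) and (−v, −d*(v)), where d*(n) = −(Σᵢ wᵢ ⟪xᵢ,n⟫)/W. In particular the optimal midsagittal plane is unique up to the sign of its normal vector. -/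

import Mathlib

open RealInnerProductSpace Matrix

/-- The cross product on `ℝ³` (with the Euclidean norm). -/
noncomputable def cross3 (a b : EuclideanSpace ℝ (Fin 3)) : EuclideanSpace ℝ (Fin 3) :=
  WithLp.toLp 2 (crossProduct a b)

/-- The quadratic (small-angle) plane-fitting objective
`F(n,d) = (1/K) ∑ i, w i (⟪x i, n⟫ + d)² + (γ/N) ∑ j, p j ‖y j × n‖²/‖y j‖²`. -/
noncomputable def quadObjective (K N : ℕ) (x : Fin K → EuclideanSpace ℝ (Fin 3))
    (w : Fin K → ℝ) (y : Fin N → EuclideanSpace ℝ (Fin 3)) (p : Fin N → ℝ) (γ : ℝ)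
    (n : EuclideanSpace ℝ (Fin 3)) (d : ℝ) : ℝ :=
  (1 / (K : ℝ)) * ∑ i, w i * (⟪x i, n⟫ + d) ^ 2 +
    (γ / (N : ℝ)) * ∑ j, p j * ‖cross3 (y j) n‖ ^ 2 / ‖y j‖ ^ 2

/-- The optimal offset `d*(n) = -(∑ i, w i ⟪x i, n⟫)/W`. -/
noncomputable def optOffset (K : ℕ) (x : Fin K → EuclideanSpace ℝ (Fin 3))
    (w : Fin K → ℝ) (W : ℝ) (n : EuclideanSpace ℝ (Fin 3)) : ℝ :=
  -(∑ i, w i * ⟪x i, n⟫) / W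

/-! Completing the square in `d` gives `F(n, d) = nᵀ B n + (W / K) (d - d*(n))²`, Lagrange's
identity turning `‖y × n‖²` into `‖y‖² ‖n‖² - ⟪y, n⟫²`. As `λ₁` is the smallest eigenvalue,
`B - λ₁ I` is positive semidefinite, so `nᵀ B n ≥ λ₁` on the unit sphere with equality exactly at
eigenvectors for `λ₁`; simplicity of `λ₁` leaves only `n = ±v`, and the square vanishes only at
`d = d*(n)`. -/

section Rayleigh

variable {ι : Type*} [Fintype ι] [DecidableEq ι] {B : Matrix ι ι ℝ} {lam : ℝ}

theorem Matrix.IsHermitian.posSemidef_sub_smul_one (hB : B.IsHermitian)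
    (hlam : ∀ (μ : ℝ) (u : ι → ℝ), u ≠ 0 → B *ᵥ u = μ • u → lam ≤ μ) :
    (B - lam • (1 : Matrix ι ι ℝ)).PosSemidef := by
  have hA : (B - lam • (1 : Matrix ι ι ℝ)).IsHermitian :=
    hB.sub (isHermitian_one.smul (IsSelfAdjoint.all lam))
  refine hA.posSemidef_iff_eigenvalues_nonneg.2 fun k => ?_
  have hk : B *ᵥ hA.eigenvectorBasis k = (hA.eigenvalues k + lam) • hA.eigenvectorBasis k := by
    have := hA.mulVec_eigenvectorBasis k
    rw [sub_mulVec, smul_mulVec, one_mulVec, sub_eq_iff_eq_add] at this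
    rw [this, add_smul]
  have := hlam _ _ (by simpa using hA.eigenvectorBasis.toBasis.ne_zero k) hk
  simp only [Pi.zero_apply]
  linarith

theorem Matrix.PosSemidef.mul_dotProduct_self_le (hA : (B - lam • (1 : Matrix ι ι ℝ)).PosSemidef)
    (u : ι → ℝ) : lam * (u ⬝ᵥ u) ≤ u ⬝ᵥ (B *ᵥ u) := by
  have := hA.dotProduct_mulVec_nonneg u
  simp only [star_trivial, sub_mulVec, smul_mulVec, one_mulVec, dotProduct_sub, dotProduct_smul,
    smul_eq_mul] at this
  linarith

theorem Matrix.PosSemidef.mulVec_eq_smul_of_dotProduct_mulVec_eq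
    (hA : (B - lam • (1 : Matrix ι ι ℝ)).PosSemidef) {u : ι → ℝ}
    (hu : u ⬝ᵥ (B *ᵥ u) = lam * (u ⬝ᵥ u)) : B *ᵥ u = lam • u := by
  have := (hA.dotProduct_mulVec_zero_iff u).1 (by
    simp only [star_trivial, sub_mulVec, smul_mulVec, one_mulVec, dotProduct_sub, dotProduct_smul,
      smul_eq_mul, hu, sub_self])
  rwa [sub_mulVec, smul_mulVec, one_mulVec, sub_eq_zero] at this

end Rayleigh

theorem eq_or_eq_neg_of_eq_smul {E : Type*} [NormedAddCommGroup E] [NormedSpace ℝ E] {u v : E}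
    {c : ℝ} (hu : ‖u‖ = 1) (hv : ‖v‖ = 1) (h : u = c • v) : u = v ∨ u = -v := by
  have hc : |c| = 1 := by rwa [h, norm_smul, hv, mul_one, Real.norm_eq_abs] at hu
  rcases abs_eq zero_le_one |>.1 hc with rfl | rfl
  · exact .inl (by rw [h, one_smul])
  · exact .inr (by rw [h, neg_one_smul])

theorem Finset.sum_mul_add_sq_eq {ι R : Type*} [Field R] (s : Finset ι) (w a : ι → R) (d : R)
    (hw : ∑ i ∈ s, w i ≠ 0) :
    ∑ i ∈ s, w i * (a i + d) ^ 2
      = ∑ i ∈ s, w i * a i ^ 2 - (∑ i ∈ s, w i * a i) ^ 2 / ∑ i ∈ s, w i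
        + (∑ i ∈ s, w i) * (d + (∑ i ∈ s, w i * a i) / ∑ i ∈ s, w i) ^ 2 := by
  have expand : ∑ i ∈ s, w i * (a i + d) ^ 2
      = ∑ i ∈ s, w i * a i ^ 2 + 2 * d * ∑ i ∈ s, w i * a i + d ^ 2 * ∑ i ∈ s, w i := by
    simp only [Finset.mul_sum, ← Finset.sum_add_distrib]
    exact Finset.sum_congr rfl fun i _ => by ring
  rw [expand]
  field_simp
  ring

theorem EuclideanSpace.real_inner_eq_dotProduct {ι : Type*} [Fintype ι]
    (a b : EuclideanSpace ℝ ι) : ⟪a, b⟫ = a ⬝ᵥ b := by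
  rw [EuclideanSpace.inner_eq_star_dotProduct, star_trivial, dotProduct_comm]

theorem EuclideanSpace.dotProduct_self_eq_norm_sq {ι : Type*} [Fintype ι]
    (u : EuclideanSpace ℝ ι) : u ⬝ᵥ u = ‖u‖ ^ 2 := by
  rw [← EuclideanSpace.real_inner_eq_dotProduct, real_inner_self_eq_norm_sq]

theorem norm_cross3_sq (a b : EuclideanSpace ℝ (Fin 3)) :
    ‖cross3 a b‖ ^ 2 = ‖a‖ ^ 2 * ‖b‖ ^ 2 - ⟪a, b⟫ ^ 2 := by
  simp only [← real_inner_self_eq_norm_sq, EuclideanSpace.real_inner_eq_dotProduct, cross3,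
    cross_dot_cross, dotProduct_comm b a]
  ring

theorem dotProduct_vecMulVec_mulVec {ι : Type*} [Fintype ι] (a u : ι → ℝ) :
    u ⬝ᵥ (vecMulVec a a *ᵥ u) = (a ⬝ᵥ u) ^ 2 := by
  simp [vecMulVec_mulVec, dotProduct_comm u a, sq]

noncomputable def landmarkMatrix (K N : ℕ) (x : Fin K → EuclideanSpace ℝ (Fin 3))
    (w : Fin K → ℝ) (W : ℝ) (y : Fin N → EuclideanSpace ℝ (Fin 3)) (p : Fin N → ℝ) (γ : ℝ) :
    Matrix (Fin 3) (Fin 3) ℝ :=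
  (1 / (K : ℝ)) • (∑ i, w i • Matrix.vecMulVec (x i) (x i)
      - (1 / W) • Matrix.vecMulVec (∑ i, w i • x i) (∑ i, w i • x i))
    + (γ / (N : ℝ)) • ∑ j, (p j / ‖y j‖ ^ 2) •
      (‖y j‖ ^ 2 • (1 : Matrix (Fin 3) (Fin 3) ℝ) - Matrix.vecMulVec (y j) (y j))

section Objective

variable (K N : ℕ) (x : Fin K → EuclideanSpace ℝ (Fin 3)) (w : Fin K → ℝ) (W : ℝ)
  (y : Fin N → EuclideanSpace ℝ (Fin 3)) (p : Fin N → ℝ) (γ : ℝ)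

theorem dotProduct_landmarkMatrix_mulVec (n : EuclideanSpace ℝ (Fin 3)) :
    n ⬝ᵥ (landmarkMatrix K N x w W y p γ *ᵥ n)
      = (1 / (K : ℝ)) * (∑ i, w i * ⟪x i, n⟫ ^ 2 - (1 / W) * (∑ i, w i * ⟪x i, n⟫) ^ 2)
        + (γ / (N : ℝ)) * ∑ j, p j / ‖y j‖ ^ 2 * (‖y j‖ ^ 2 * ‖n‖ ^ 2 - ⟪y j, n⟫ ^ 2) := by
  simp only [landmarkMatrix, add_mulVec, sub_mulVec, smul_mulVec, sum_mulVec, one_mulVec,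
    dotProduct_add, dotProduct_sub, dotProduct_smul, dotProduct_sum, dotProduct_vecMulVec_mulVec,
    WithLp.ofLp_smul, sum_dotProduct, smul_dotProduct,
    EuclideanSpace.real_inner_eq_dotProduct, ← real_inner_self_eq_norm_sq, smul_eq_mul]

theorem quadObjective_eq_dotProduct_add_sq (hW : W = ∑ i, w i) (hW0 : W ≠ 0)
    (n : EuclideanSpace ℝ (Fin 3)) (d : ℝ) :
    quadObjective K N x w y p γ n d
      = n ⬝ᵥ (landmarkMatrix K N x w W y p γ *ᵥ n) + W / K * (d - optOffset K x w W n) ^ 2 := by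
  subst hW
  rw [dotProduct_landmarkMatrix_mulVec, quadObjective, optOffset,
    Finset.sum_mul_add_sq_eq _ _ _ _ hW0]
  simp only [norm_cross3_sq, mul_div_right_comm]
  ring

theorem quadObjective_neg (n : EuclideanSpace ℝ (Fin 3)) (d : ℝ) :
    quadObjective K N x w y p γ (-n) (-d) = quadObjective K N x w y p γ n d := by
  have hcross : ∀ a, ‖cross3 a (-n)‖ = ‖cross3 a n‖ := fun a => by
    simp only [cross3, WithLp.ofLp_neg, map_neg, WithLp.toLp_neg, norm_neg]
  simp only [quadObjective, inner_neg_right, ← neg_add, neg_sq, hcross]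

theorem optOffset_neg (n : EuclideanSpace ℝ (Fin 3)) :
    optOffset K x w W (-n) = -optOffset K x w W n := by
  simp only [optOffset, inner_neg_right, mul_neg, Finset.sum_neg_distrib, neg_neg, neg_div]

variable {K N x w W y p γ} {lam : ℝ}

theorem le_quadObjective (hW : W = ∑ i, w i) (hWK : 0 < W / K)
    (hA : (landmarkMatrix K N x w W y p γ - lam • (1 : Matrix (Fin 3) (Fin 3) ℝ)).PosSemidef)
    {n : EuclideanSpace ℝ (Fin 3)} (hn : ‖n‖ = 1) (d : ℝ) :
    lam ≤ quadObjective K N x w y p γ n d := by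
  have hQ := hA.mul_dotProduct_self_le n
  rw [EuclideanSpace.dotProduct_self_eq_norm_sq, hn, one_pow, mul_one] at hQ
  rw [quadObjective_eq_dotProduct_add_sq K N x w W y p γ hW (div_ne_zero_iff.1 hWK.ne').1]
  have hsq := mul_nonneg hWK.le (sq_nonneg (d - optOffset K x w W n))
  linarith

theorem mulVec_eq_smul_and_eq_optOffset_of_quadObjective_le (hW : W = ∑ i, w i)
    (hWK : 0 < W / K)
    (hA : (landmarkMatrix K N x w W y p γ - lam • (1 : Matrix (Fin 3) (Fin 3) ℝ)).PosSemidef)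
    {n : EuclideanSpace ℝ (Fin 3)} (hn : ‖n‖ = 1) {d : ℝ}
    (h : quadObjective K N x w y p γ n d ≤ lam) :
    landmarkMatrix K N x w W y p γ *ᵥ n = lam • n ∧ d = optOffset K x w W n := by
  have hQ := hA.mul_dotProduct_self_le n
  rw [EuclideanSpace.dotProduct_self_eq_norm_sq, hn, one_pow, mul_one] at hQ
  rw [quadObjective_eq_dotProduct_add_sq K N x w W y p γ hW (div_ne_zero_iff.1 hWK.ne').1] at h
  have hsq := mul_nonneg hWK.le (sq_nonneg (d - optOffset K x w W n))
  refine ⟨hA.mulVec_eq_smul_of_dotProduct_mulVec_eq ?_, ?_⟩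
  · rw [EuclideanSpace.dotProduct_self_eq_norm_sq, hn]
    linarith
  · have hzero : W / K * (d - optOffset K x w W n) ^ 2 = 0 := by linarith
    simpa [hWK.ne', sub_eq_zero] using hzero

end Objective

theorem midsagittal_plane_unique_up_to_sign_general
    (K N : ℕ) (hK : 0 < K)
    (x : Fin K → EuclideanSpace ℝ (Fin 3)) (w : Fin K → ℝ) (hw : ∀ i, 0 < w i)
    (W : ℝ) (hW : W = ∑ i, w i)
    (y : Fin N → EuclideanSpace ℝ (Fin 3))
    (p : Fin N → ℝ) (γ : ℝ)
    (B : Matrix (Fin 3) (Fin 3) ℝ) (hBsymm : B.IsSymm)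
    (hB : B = (1 / (K : ℝ)) • (∑ i, w i • Matrix.vecMulVec (x i) (x i)
          - (1 / W) • Matrix.vecMulVec (∑ i, w i • x i) (∑ i, w i • x i))
        + (γ / (N : ℝ)) • ∑ j, (p j / ‖y j‖ ^ 2) •
            (‖y j‖ ^ 2 • (1 : Matrix (Fin 3) (Fin 3) ℝ) - Matrix.vecMulVec (y j) (y j)))
    (lam : ℝ) (v : EuclideanSpace ℝ (Fin 3)) (hv : ‖v‖ = 1)
    (hev : B *ᵥ v = lam • v)
    (hsmallest : ∀ (μ : ℝ) (u : EuclideanSpace ℝ (Fin 3)), u ≠ 0 → B *ᵥ u = μ • u → lam ≤ μ)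
    (hsimple : ∀ u : EuclideanSpace ℝ (Fin 3), B *ᵥ u = lam • u → ∃ c : ℝ, u = c • v) :
    {q : EuclideanSpace ℝ (Fin 3) × ℝ |
        ‖q.1‖ = 1 ∧ ∀ (n : EuclideanSpace ℝ (Fin 3)) (d : ℝ), ‖n‖ = 1 →
          quadObjective K N x w y p γ q.1 q.2 ≤ quadObjective K N x w y p γ n d}
      = {(v, optOffset K x w W v), (-v, -(optOffset K x w W v))} := by
  obtain rfl : B = landmarkMatrix K N x w W y p γ := hB
  have hWpos : 0 < W := hW ▸ Finset.sum_pos (fun i _ => hw i) ⟨⟨0, hK⟩, Finset.mem_univ _⟩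
  have hWK : 0 < W / K := div_pos hWpos (Nat.cast_pos.2 hK)
  have hA := (isHermitian_iff_isSymm.2 hBsymm).posSemidef_sub_smul_one
    fun μ u hu => hsmallest μ (WithLp.toLp 2 u) (by simpa using hu)
  have hFv : quadObjective K N x w y p γ v (optOffset K x w W v) = lam := by
    rw [quadObjective_eq_dotProduct_add_sq K N x w W y p γ hW hWpos.ne', hev, dotProduct_smul,
      EuclideanSpace.dotProduct_self_eq_norm_sq, hv]
    simp
  ext ⟨n, d⟩
  simp only [Set.mem_ofPred_eq, Set.mem_insert_iff, Set.mem_singleton_iff, Prod.mk.injEq]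
  constructor
  · rintro ⟨hn, hmin⟩
    obtain ⟨hBn, rfl⟩ :=
      mulVec_eq_smul_and_eq_optOffset_of_quadObjective_le hW hWK hA hn (hFv ▸ hmin v _ hv)
    obtain ⟨c, hc⟩ := hsimple n hBn
    rcases eq_or_eq_neg_of_eq_smul hn hv hc with rfl | rfl
    · exact .inl ⟨rfl, rfl⟩
    · exact .inr ⟨rfl, optOffset_neg K x w W v⟩
  · rintro (⟨rfl, rfl⟩ | ⟨rfl, rfl⟩)
    · exact ⟨hv, fun n d hn => hFv ▸ le_quadObjective hW hWK hA hn d⟩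
    · refine ⟨by rw [norm_neg, hv], fun n d hn => ?_⟩
      rw [quadObjective_neg, hFv]
      exact le_quadObjective hW hWK hA hn d

/-- **Existence and uniqueness of the optimal midsagittal plane (quadratic approximation).**
Let `B` be a real symmetric `3 × 3` matrix whose smallest eigenvalue `lam` has a
one-dimensional eigenspace spanned by a unit vector `v`, and suppose `B` is the landmark
matrix built from points `x i` with positive weights `w i` (total weight `W`), nonzero
vectors `y j` with positive weights `p j`, and `γ > 0`.  Then the quadratic plane-fitting
objective `F`, minimized over pairs `(n, d)` with `‖n‖ = 1`, has exactly the two minimizers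
`(v, d*(v))` and `(-v, -d*(v))`: the optimal plane is unique up to the sign of its normal. -/
theorem midsagittal_plane_unique_up_to_sign
    (K N : ℕ) (hK : 0 < K) (hN : 0 < N)
    (x : Fin K → EuclideanSpace ℝ (Fin 3)) (w : Fin K → ℝ) (hw : ∀ i, 0 < w i)
    (W : ℝ) (hW : W = ∑ i, w i)
    (y : Fin N → EuclideanSpace ℝ (Fin 3)) (hy : ∀ j, y j ≠ 0)
    (p : Fin N → ℝ) (hp : ∀ j, 0 < p j) (γ : ℝ) (hγ : 0 < γ)
    (B : Matrix (Fin 3) (Fin 3) ℝ) (hBsymm : B.IsSymm)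
    (hB : B = (1 / (K : ℝ)) • (∑ i, w i • Matrix.vecMulVec (x i) (x i)
          - (1 / W) • Matrix.vecMulVec (∑ i, w i • x i) (∑ i, w i • x i))
        + (γ / (N : ℝ)) • ∑ j, (p j / ‖y j‖ ^ 2) •
            (‖y j‖ ^ 2 • (1 : Matrix (Fin 3) (Fin 3) ℝ) - Matrix.vecMulVec (y j) (y j)))
    (lam : ℝ) (v : EuclideanSpace ℝ (Fin 3)) (hv : ‖v‖ = 1)
    (hev : B *ᵥ v = lam • v)
    (hsmallest : ∀ (μ : ℝ) (u : EuclideanSpace ℝ (Fin 3)), u ≠ 0 → B *ᵥ u = μ • u → lam ≤ μ)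
    (hsimple : ∀ u : EuclideanSpace ℝ (Fin 3), B *ᵥ u = lam • u → ∃ c : ℝ, u = c • v) :
    {q : EuclideanSpace ℝ (Fin 3) × ℝ |
        ‖q.1‖ = 1 ∧ ∀ (n : EuclideanSpace ℝ (Fin 3)) (d : ℝ), ‖n‖ = 1 →
          quadObjective K N x w y p γ q.1 q.2 ≤ quadObjective K N x w y p γ n d}
      = {(v, optOffset K x w W v), (-v, -(optOffset K x w W v))} :=
  midsagittal_plane_unique_up_to_sign_general K N hK x w hw W hW y p γ B hBsymm hB lam v hv hev
    hsmallest hsimple
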